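/- Let f₁ = x², f₂ = y², so ℓ₁(𝐬) = 2s₁ and ℓ₂(𝐬) = 2s₂, and let 𝔞 ⊆ ℚ[s₁,s₂] be the ideal generated by the polynomials g_c = ∏_{j: c_j<0} C(s_j,-c_j) · ∏_{i: ℓ_i(c)>0} C(ℓ_i(𝐬)+ℓ_i(c), ℓ_i(c)) for all c = (c₁,c₂) ∈ ℤ² with c₁+c₂ = 1, where C(u,m) is the binomial polynomial u(u-1)⋯(u-m+1)/m!. Then the ideal {b ∈ ℚ[t] : b(s₁+s₂) ∈ 𝔞} is generated by (t+1)(t+3/2)(t+2). -/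

import Mathlib

open MvPolynomial

/-- The binomial coefficient polynomial `C(u,m) = u(u-1)⋯(u-m+1)/m!`. -/
noncomputable def binom {σ : Type*} (u : MvPolynomial σ ℚ) (m : ℕ) : MvPolynomial σ ℚ :=
  ((m.factorial : ℚ)⁻¹) • ∏ i ∈ Finset.range m, (u - (i : MvPolynomial σ ℚ))

/-- For `f₁ = x²`, `f₂ = y²`: `ℓ₁(𝐬) = 2s₁`, `ℓ₂(𝐬) = 2s₂`. -/
noncomputable def ellS (i : Fin 2) : MvPolynomial (Fin 2) ℚ := 2 * X i

/-- `ℓ_i(c) = 2c_i` on `ℤ²`. -/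
def ellZ (i : Fin 2) (c : Fin 2 → ℤ) : ℤ := 2 * c i

/-- `g_c = ∏_{j : c_j<0} C(s_j,-c_j) · ∏_{i : ℓ_i(c)>0} C(ℓ_i(𝐬)+ℓ_i(c), ℓ_i(c))`. -/
noncomputable def gc (c : Fin 2 → ℤ) : MvPolynomial (Fin 2) ℚ :=
  (∏ j ∈ Finset.univ.filter (fun j => c j < 0), binom (X j) (-(c j)).toNat) *
  (∏ i ∈ Finset.univ.filter (fun i => 0 < ellZ i c),
    binom (ellS i + ((ellZ i c).toNat : MvPolynomial (Fin 2) ℚ)) (ellZ i c).toNat)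

/-- The Bernstein–Sato ideal `𝔞` generated by the `g_c` with `c₁+c₂ = 1`. -/
noncomputable def af : Ideal (MvPolynomial (Fin 2) ℚ) :=
  Ideal.span {p | ∃ c : Fin 2 → ℤ, (∑ i, c i) = 1 ∧ p = gc c}

lemma prod_range_eq_zero {m k : ℕ} (hk : k < m) (v : ℚ) (hv : v = k) :
    ∏ j ∈ Finset.range m, (v - (j : ℚ)) = 0 :=
  Finset.prod_eq_zero (Finset.mem_range.2 hk) (by simp [hv])

lemma eval_gc_zero (a : Fin 2 → ℚ) (c : Fin 2 → ℤ) (i : Fin 2) (hi : 0 < c i)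
    (hai : a i = -1/2 ∨ a i = -1) : eval a (gc c) = 0 := by
  have h2 : 2 ≤ (2 * c i).toNat := by omega
  unfold gc
  rw [map_mul]
  apply mul_eq_zero_of_right
  rw [map_prod]
  apply Finset.prod_eq_zero (i := i)
  · exact Finset.mem_filter.2 ⟨Finset.mem_univ _, by simp only [ellZ]; omega⟩
  · unfold binom
    rw [smul_eq_C_mul, map_mul, eval_C, map_prod]
    apply mul_eq_zero_of_right
    calc ∏ j ∈ Finset.range (ellZ i c).toNat,
          eval a (ellS i + (((ellZ i c).toNat : ℕ) : MvPolynomial (Fin 2) ℚ)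
            - (j : MvPolynomial (Fin 2) ℚ))
        = ∏ j ∈ Finset.range (2 * c i).toNat,
            (2 * a i + ((2 * c i).toNat : ℚ) - (j : ℚ)) := by
          apply Finset.prod_congr (by simp [ellZ])
          intro j _
          simp [ellS, ellZ]
      _ = 0 := by
          rcases hai with h | h
          · refine prod_range_eq_zero (k := (2 * c i).toNat - 1) (by omega) _ ?_
            rw [h]
            push_cast [Nat.cast_sub (by omega : 1 ≤ (2 * c i).toNat)]
            ring
          · refine prod_range_eq_zero (k := (2 * c i).toNat - 2) (by omega) _ ?_
            rw [h]
            push_cast [Nat.cast_sub h2]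
            ring

lemma eval_af_zero (a : Fin 2 → ℚ) (ha0 : a 0 = -1/2 ∨ a 0 = -1)
    (ha1 : a 1 = -1/2 ∨ a 1 = -1) {p : MvPolynomial (Fin 2) ℚ} (hp : p ∈ af) :
    eval a p = 0 := by
  have hle : af ≤ RingHom.ker (eval a) := by
    rw [af, Ideal.span_le]
    rintro q ⟨c, hc, rfl⟩
    rw [Fin.sum_univ_two] at hc
    rw [SetLike.mem_coe, RingHom.mem_ker]
    rcases lt_or_ge 0 (c 0) with h | h
    · exact eval_gc_zero a c 0 h ha0
    · exact eval_gc_zero a c 1 (by omega) ha1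
  exact hle hp

lemma eval_aeval (a : Fin 2 → ℚ) (b : Polynomial ℚ) :
    eval a (Polynomial.aeval (X 0 + X 1 : MvPolynomial (Fin 2) ℚ) b)
      = Polynomial.eval (a 0 + a 1) b := by
  rw [Polynomial.aeval_def, Polynomial.hom_eval₂]
  have h1 : (eval a).comp (algebraMap ℚ (MvPolynomial (Fin 2) ℚ)) = RingHom.id ℚ := by
    ext q
    simp [MvPolynomial.algebraMap_eq]
  have h2 : eval a (X 0 + X 1 : MvPolynomial (Fin 2) ℚ) = a 0 + a 1 := by simp
  rw [h1, h2]
  rfl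

lemma gc10 : gc ![1, 0] = C ((2:ℚ)⁻¹) * ((2 * X 0 + 2) * (2 * X 0 + 1)) := by
  have h1 : Finset.univ.filter (fun j => (![1,0] : Fin 2 → ℤ) j < 0) = ∅ := by decide
  have h2 : Finset.univ.filter (fun i => 0 < ellZ i ![1,0]) = {0} := by decide
  have h3 : ellZ 0 ![1,0] = 2 := by decide
  rw [gc, h1, h2, Finset.prod_empty, Finset.prod_singleton, one_mul, h3,
    show ((2:ℤ).toNat) = 2 from rfl, binom, smul_eq_C_mul,
    show ((Nat.factorial 2 : ℚ)) = 2 by norm_num [Nat.factorial],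
    Finset.prod_range_succ, Finset.prod_range_succ, Finset.prod_range_zero, one_mul, ellS]
  push_cast
  ring

lemma gc01 : gc ![0, 1] = C ((2:ℚ)⁻¹) * ((2 * X 1 + 2) * (2 * X 1 + 1)) := by
  have h1 : Finset.univ.filter (fun j => (![0,1] : Fin 2 → ℤ) j < 0) = ∅ := by decide
  have h2 : Finset.univ.filter (fun i => 0 < ellZ i ![0,1]) = {1} := by decide
  have h3 : ellZ 1 ![0,1] = 2 := by decide
  rw [gc, h1, h2, Finset.prod_empty, Finset.prod_singleton, one_mul, h3,
    show ((2:ℤ).toNat) = 2 from rfl, binom, smul_eq_C_mul,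
    show ((Nat.factorial 2 : ℚ)) = 2 by norm_num [Nat.factorial],
    Finset.prod_range_succ, Finset.prod_range_succ, Finset.prod_range_zero, one_mul, ellS]
  push_cast
  ring

theorem stmt_5 :
    Ideal.comap (Polynomial.aeval (X 0 + X 1 : MvPolynomial (Fin 2) ℚ)).toRingHom af =
      Ideal.span {(Polynomial.X + 1) * (Polynomial.X + Polynomial.C (3/2 : ℚ)) *
        (Polynomial.X + 2)} := by
  apply le_antisymm
  · intro b hb
    rw [Ideal.mem_comap] at hb
    have hroot : ∀ (a : Fin 2 → ℚ), (a 0 = -1/2 ∨ a 0 = -1) → (a 1 = -1/2 ∨ a 1 = -1) →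
        Polynomial.eval (a 0 + a 1) b = 0 := by
      intro a h0 h1
      rw [← eval_aeval a b]
      exact eval_af_zero a h0 h1 hb
    have e1 : Polynomial.eval (-1 : ℚ) b = 0 := by
      have := hroot ![-1/2, -1/2] (Or.inl rfl) (Or.inl rfl)
      norm_num at this
      exact this
    have e2 : Polynomial.eval (-(3/2) : ℚ) b = 0 := by
      have := hroot ![-1/2, -1] (Or.inl rfl) (Or.inr rfl)
      norm_num at this
      convert this using 2
    have e3 : Polynomial.eval (-2 : ℚ) b = 0 := by
      have := hroot ![-1, -1] (Or.inr rfl) (Or.inr rfl)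
      norm_num at this
      exact this
    have d1 : Polynomial.X - Polynomial.C (-1 : ℚ) ∣ b := Polynomial.dvd_iff_isRoot.2 e1
    have d2 : Polynomial.X - Polynomial.C (-(3/2) : ℚ) ∣ b := Polynomial.dvd_iff_isRoot.2 e2
    have d3 : Polynomial.X - Polynomial.C (-2 : ℚ) ∣ b := Polynomial.dvd_iff_isRoot.2 e3
    have c12 : IsCoprime (Polynomial.X - Polynomial.C (-1 : ℚ))
        (Polynomial.X - Polynomial.C (-(3/2) : ℚ)) :=
      Polynomial.isCoprime_X_sub_C_of_isUnit_sub (by norm_num)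
    have c13 : IsCoprime (Polynomial.X - Polynomial.C (-1 : ℚ))
        (Polynomial.X - Polynomial.C (-2 : ℚ)) :=
      Polynomial.isCoprime_X_sub_C_of_isUnit_sub (by norm_num)
    have c23 : IsCoprime (Polynomial.X - Polynomial.C (-(3/2) : ℚ))
        (Polynomial.X - Polynomial.C (-2 : ℚ)) :=
      Polynomial.isCoprime_X_sub_C_of_isUnit_sub (by norm_num)
    have d12 : (Polynomial.X - Polynomial.C (-1 : ℚ)) *
        (Polynomial.X - Polynomial.C (-(3/2) : ℚ)) ∣ b := c12.mul_dvd d1 d2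
    have dall : (Polynomial.X - Polynomial.C (-1 : ℚ)) *
        (Polynomial.X - Polynomial.C (-(3/2) : ℚ)) *
        (Polynomial.X - Polynomial.C (-2 : ℚ)) ∣ b :=
      (IsCoprime.mul_left c13 c23).mul_dvd d12 d3
    rw [Ideal.mem_span_singleton]
    have hrw : (Polynomial.X + 1) * (Polynomial.X + Polynomial.C (3/2 : ℚ)) *
        (Polynomial.X + 2) = (Polynomial.X - Polynomial.C (-1 : ℚ)) *
        (Polynomial.X - Polynomial.C (-(3/2) : ℚ)) *
        (Polynomial.X - Polynomial.C (-2 : ℚ)) := by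
      simp [map_neg, sub_neg_eq_add, map_one, map_ofNat]
    rw [hrw]
    exact dall
  · rw [Ideal.span_le, Set.singleton_subset_iff, SetLike.mem_coe, Ideal.mem_comap]
    have key : (Polynomial.aeval (X 0 + X 1 : MvPolynomial (Fin 2) ℚ)).toRingHom
        ((Polynomial.X + 1) * (Polynomial.X + Polynomial.C (3/2 : ℚ)) * (Polynomial.X + 2))
        = (C ((2:ℚ)⁻¹) * (X 0 + 3 * X 1 + 3)) * gc ![1, 0]
          + (C ((2:ℚ)⁻¹) * (3 * X 0 + X 1 + 3)) * gc ![0, 1] := by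
      rw [gc10, gc01]
      apply MvPolynomial.funext
      intro x
      simp only [AlgHom.toRingHom_eq_coe, RingHom.coe_coe, map_mul, map_add,
        Polynomial.aeval_X, Polynomial.aeval_C, map_one, map_ofNat, eval_C, eval_X,
        MvPolynomial.algebraMap_eq]
      ring
    rw [key]
    refine Ideal.add_mem _ ?_ ?_
    · refine Ideal.mul_mem_left _ _ (Ideal.subset_span ⟨![1, 0], ?_, rfl⟩)
      simp [Fin.sum_univ_two]
    · refine Ideal.mul_mem_left _ _ (Ideal.subset_span ⟨![0, 1], ?_, rfl⟩)
      simp [Fin.sum_univ_two]
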